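/- Let (X,F) be an equicontinuous nonautonomous system generated by a commutative family of homeomorphisms of a compact metric space, and let x be almost periodic. Then the closure of the orbital hull O_H(x) is uniformly almost periodic: for every ε > 0 there exists M > 0 such that for every y in the closure of O_H(x), the set {n ∈ ℤ : d(ω_n(y), y) < ε} is M-syndetic. -/
import Mathlib


open Metric Filter

/-- Forward time maps: `posComp f n = f n ∘ ⋯ ∘ f 1`. -/
def posComp {X : Type*} [TopologicalSpace X] (f : ℕ → X ≃ₜ X) : ℕ → X → X
  | 0 => id
  | n + 1 => (f (n + 1)) ∘ posComp f n

/-- Backward time maps: `negComp f n = f 1⁻¹ ∘ ⋯ ∘ f n⁻¹`. -/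
def negComp {X : Type*} [TopologicalSpace X] (f : ℕ → X ≃ₜ X) : ℕ → X → X
  | 0 => id
  | n + 1 => negComp f n ∘ (f (n + 1)).symm

/-- The time-`n` map `ω_n` of the nonautonomous system generated by `f`. -/
def omegaMap {X : Type*} [TopologicalSpace X] (f : ℕ → X ≃ₜ X) (n : ℤ) : X → X :=
  if 0 ≤ n then posComp f n.toNat else negComp f (-n).toNat

/-- The family is commutative. -/
def Commutes {X : Type*} [TopologicalSpace X] (f : ℕ → X ≃ₜ X) : Prop :=
  ∀ i j, ∀ x : X, f i (f j x) = f j (f i x)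

/-- Orbit `O(x) = {ω_n x : n ∈ ℤ}`. -/
def orbit' {X : Type*} [TopologicalSpace X] (f : ℕ → X ≃ₜ X) (x : X) : Set X :=
  Set.range fun n : ℤ => omegaMap f n x

/-- Orbital hull `O_H(x) = {ω_{k_n} ∘ ⋯ ∘ ω_{k_1} x : k_i ∈ ℤ}`. -/
def orbitalHull {X : Type*} [TopologicalSpace X] (f : ℕ → X ≃ₜ X) (x : X) : Set X :=
  {y | ∃ l : List ℤ, y = l.foldr (fun k z => omegaMap f k z) x}

/-- Truncated orbital hull of order `k`. -/
def truncHull {X : Type*} [TopologicalSpace X] (f : ℕ → X ≃ₜ X) (k : ℕ) (x : X) : Set X :=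
  {y | ∃ l : List ℤ, (∀ r ∈ l, |r| ≤ (k : ℤ)) ∧ y = l.foldr (fun j z => omegaMap f j z) x}

/-- `x` is periodic of period `r`: `ω_{n r} x = x` for all `n ∈ ℤ`. -/
def PeriodicPt {X : Type*} [TopologicalSpace X] (f : ℕ → X ≃ₜ X) (r : ℕ) (x : X) : Prop :=
  ∀ n : ℤ, omegaMap f (n * r) x = x

/-- `Y` is invariant: `ω_k(Y) ⊆ Y` for all `k ∈ ℤ`. -/
def Invariant {X : Type*} [TopologicalSpace X] (f : ℕ → X ≃ₜ X) (Y : Set X) : Prop :=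
  ∀ k : ℤ, omegaMap f k '' Y ⊆ Y

/-- The system is minimal: no proper nonempty closed invariant subset. -/
def MinimalSys {X : Type*} [TopologicalSpace X] (f : ℕ → X ≃ₜ X) : Prop :=
  ∀ Y : Set X, Y.Nonempty → IsClosed Y → Invariant f Y → Y = Set.univ

/-- Equicontinuity of the system. -/
def Equicont {X : Type*} [MetricSpace X] (f : ℕ → X ≃ₜ X) : Prop :=
  ∀ ε > (0 : ℝ), ∃ δ > (0 : ℝ), ∀ a b : X, dist a b < δ →
    ∀ n : ℤ, dist (omegaMap f n a) (omegaMap f n b) < ε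

/-- `S ⊆ ℤ` is `M`-syndetic. -/
def MSyndetic (S : Set ℤ) (M : ℤ) : Prop :=
  ∀ a : ℤ, ∃ n ∈ S, a ≤ n ∧ n < a + M

/-- `x` is almost periodic. -/
def AlmostPeriodicPt {X : Type*} [MetricSpace X] (f : ℕ → X ≃ₜ X) (x : X) : Prop :=
  ∀ ε > (0 : ℝ), ∃ M : ℤ, 0 < M ∧ MSyndetic {n : ℤ | dist (omegaMap f n x) x < ε} M

/-- The system is sensitive at `x`. -/
def SensitiveAt {X : Type*} [MetricSpace X] (f : ℕ → X ≃ₜ X) (x : X) : Prop :=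
  ∃ δ > (0 : ℝ), ∀ U : Set X, IsOpen U → x ∈ U → ∃ m : ℤ, δ < diam (omegaMap f m '' U)

/-- Topological transitivity. -/
def TopTransitive {X : Type*} [TopologicalSpace X] (f : ℕ → X ≃ₜ X) : Prop :=
  ∀ U V : Set X, IsOpen U → IsOpen V → U.Nonempty → V.Nonempty →
    ∃ k : ℤ, ((omegaMap f k '' U) ∩ V).Nonempty

section Aux

variable {X : Type*} [TopologicalSpace X] {f : ℕ → X ≃ₜ X}

lemma posComp_continuous (f : ℕ → X ≃ₜ X) : ∀ n, Continuous (posComp f n)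
  | 0 => continuous_id
  | (n+1) => ((f (n+1)).continuous).comp (posComp_continuous f n)

lemma negComp_continuous (f : ℕ → X ≃ₜ X) : ∀ n, Continuous (negComp f n)
  | 0 => continuous_id
  | (n+1) => (negComp_continuous f n).comp ((f (n+1)).symm.continuous)

lemma omegaMap_continuous (f : ℕ → X ≃ₜ X) (n : ℤ) : Continuous (omegaMap f n) := by
  unfold omegaMap
  split_ifs
  · exact posComp_continuous f _
  · exact negComp_continuous f _

lemma comm_symm (hcomm : Commutes f) (i j : ℕ) (x : X) : f i ((f j).symm x) = (f j).symm (f i x) := by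
  apply (f j).injective
  rw [(f j).apply_symm_apply, ← hcomm i j, (f j).apply_symm_apply]

lemma symm_symm_comm (hcomm : Commutes f) (i j : ℕ) (x : X) :
    (f i).symm ((f j).symm x) = (f j).symm ((f i).symm x) := by
  apply (f i).injective
  rw [(f i).apply_symm_apply, comm_symm hcomm, (f i).apply_symm_apply]

lemma f_posComp (hcomm : Commutes f) (i : ℕ) : ∀ n (x : X), f i (posComp f n x) = posComp f n (f i x)
  | 0, x => rfl
  | (n+1), x => by
      show f i (f (n+1) (posComp f n x)) = f (n+1) (posComp f n (f i x))
      rw [hcomm i (n+1), f_posComp hcomm i n]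

lemma symm_posComp (hcomm : Commutes f) (i : ℕ) : ∀ n (x : X),
    (f i).symm (posComp f n x) = posComp f n ((f i).symm x)
  | 0, x => rfl
  | (n+1), x => by
      show (f i).symm (f (n+1) (posComp f n x)) = f (n+1) (posComp f n ((f i).symm x))
      rw [← comm_symm hcomm (n+1) i, symm_posComp hcomm i n]

lemma f_negComp (hcomm : Commutes f) (i : ℕ) : ∀ n (x : X), f i (negComp f n x) = negComp f n (f i x)
  | 0, x => rfl
  | (n+1), x => by
      show f i (negComp f n ((f (n+1)).symm x)) = negComp f n ((f (n+1)).symm (f i x))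
      rw [f_negComp hcomm i n, comm_symm hcomm i (n+1)]

lemma symm_negComp (hcomm : Commutes f) (i : ℕ) : ∀ n (x : X),
    (f i).symm (negComp f n x) = negComp f n ((f i).symm x)
  | 0, x => rfl
  | (n+1), x => by
      show (f i).symm (negComp f n ((f (n+1)).symm x))
        = negComp f n ((f (n+1)).symm ((f i).symm x))
      rw [symm_negComp hcomm i n, symm_symm_comm hcomm i (n+1)]

lemma posComp_posComp (hcomm : Commutes f) : ∀ m n (x : X),
    posComp f m (posComp f n x) = posComp f n (posComp f m x)
  | 0, n, x => rfl
  | (m+1), n, x => by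
      show f (m+1) (posComp f m (posComp f n x)) = posComp f n (f (m+1) (posComp f m x))
      rw [posComp_posComp hcomm m n, f_posComp hcomm (m+1) n]

lemma posComp_negComp (hcomm : Commutes f) : ∀ m n (x : X),
    posComp f m (negComp f n x) = negComp f n (posComp f m x)
  | 0, n, x => rfl
  | (m+1), n, x => by
      show f (m+1) (posComp f m (negComp f n x)) = negComp f n (f (m+1) (posComp f m x))
      rw [posComp_negComp hcomm m n, f_negComp hcomm (m+1) n]

lemma negComp_negComp (hcomm : Commutes f) : ∀ m n (x : X),
    negComp f m (negComp f n x) = negComp f n (negComp f m x)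
  | 0, n, x => rfl
  | (m+1), n, x => by
      show negComp f m ((f (m+1)).symm (negComp f n x))
        = negComp f n (negComp f m ((f (m+1)).symm x))
      rw [symm_negComp hcomm (m+1) n, negComp_negComp hcomm m n]

lemma omegaMap_comm (hcomm : Commutes f) (n k : ℤ) (x : X) :
    omegaMap f n (omegaMap f k x) = omegaMap f k (omegaMap f n x) := by
  unfold omegaMap
  split_ifs
  · exact posComp_posComp hcomm _ _ x
  · exact posComp_negComp hcomm _ _ x
  · exact (posComp_negComp hcomm _ _ x).symm
  · exact negComp_negComp hcomm _ _ x

lemma omegaMap_foldr (hcomm : Commutes f) (n : ℤ) : ∀ (l : List ℤ) (x : X),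
    omegaMap f n (l.foldr (fun k z => omegaMap f k z) x)
      = l.foldr (fun k z => omegaMap f k z) (omegaMap f n x)
  | [], x => rfl
  | (k :: l), x => by
      show omegaMap f n (omegaMap f k (l.foldr (fun k z => omegaMap f k z) x))
        = omegaMap f k (l.foldr (fun k z => omegaMap f k z) (omegaMap f n x))
      rw [omegaMap_comm hcomm, omegaMap_foldr hcomm n l]

lemma foldr_continuous : ∀ l : List ℤ,
    Continuous (fun x : X => l.foldr (fun k z => omegaMap f k z) x)
  | [] => continuous_id
  | (k :: l) => (omegaMap_continuous f k).comp (foldr_continuous l)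

end Aux

/-- Every point of the orbital hull is almost periodic. -/
lemma hullPoint_ap {X : Type*} [MetricSpace X] [CompactSpace X] (f : ℕ → X ≃ₜ X)
    (hcomm : Commutes f) (x : X) (hx : AlmostPeriodicPt f x)
    (z : X) (hz : z ∈ orbitalHull f x) :
    ∀ ε > (0 : ℝ), ∃ M : ℤ, 0 < M ∧
      MSyndetic {n : ℤ | dist (omegaMap f n z) z < ε} M := by
  intro ε hε
  obtain ⟨l, hl⟩ := hz
  set g : X → X := fun w => l.foldr (fun k z => omegaMap f k z) w with hg
  have hgc : Continuous g := foldr_continuous l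
  have hgu : UniformContinuous g := CompactSpace.uniformContinuous_of_continuous hgc
  obtain ⟨δ, hδ, hδ'⟩ := Metric.uniformContinuous_iff.mp hgu ε hε
  obtain ⟨M, hM, hS⟩ := hx δ hδ
  refine ⟨M, hM, fun a => ?_⟩
  obtain ⟨n, hn, ha1, ha2⟩ := hS a
  refine ⟨n, ?_, ha1, ha2⟩
  have : omegaMap f n z = g (omegaMap f n x) := by
    rw [hl]; exact omegaMap_foldr hcomm n l x
  rw [Set.mem_setOf_eq, this, hl]
  exact hδ' hn

theorem stmt8 {X : Type*} [MetricSpace X] [CompactSpace X] (f : ℕ → X ≃ₜ X)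
    (hcomm : Commutes f) (heq : Equicont f) (x : X) (hx : AlmostPeriodicPt f x) :
    ∀ ε > (0 : ℝ), ∃ M : ℤ, 0 < M ∧
      ∀ y ∈ closure (orbitalHull f x),
        MSyndetic {n : ℤ | dist (omegaMap f n y) y < ε} M := by
  intro ε hε
  obtain ⟨δ1, hδ1, hδ1'⟩ := heq (ε/3) (by linarith)
  set δ' : ℝ := min δ1 (ε/3) with hδ'def
  have hδ'pos : 0 < δ' := lt_min hδ1 (by linarith)
  have hcompact : IsCompact (closure (orbitalHull f x)) := isClosed_closure.isCompact
  have hcover : closure (orbitalHull f x) ⊆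
      ⋃ z : orbitalHull f x, Metric.ball (z : X) δ' := by
    intro y hy
    rcases Metric.mem_closure_iff.mp hy δ' hδ'pos with ⟨z, hz, hdz⟩
    exact Set.mem_iUnion.mpr ⟨⟨z, hz⟩, by simpa [Metric.mem_ball, dist_comm] using hdz⟩
  obtain ⟨t, ht⟩ := hcompact.elim_finite_subcover
    (fun z : orbitalHull f x => Metric.ball (z : X) δ') (fun _ => Metric.isOpen_ball) hcover
  have hap : ∀ z : orbitalHull f x, ∃ M : ℤ, 0 < M ∧
      MSyndetic {n : ℤ | dist (omegaMap f n (z : X)) (z : X) < ε/3} M :=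
    fun z => hullPoint_ap f hcomm x hx z z.2 (ε/3) (by linarith)
  choose Mz hMzpos hMzsyn using hap
  refine ⟨((t.sup fun z => (Mz z).toNat : ℕ) : ℤ) ⊔ 1, lt_of_lt_of_le one_pos le_sup_right, ?_⟩
  intro y hy
  have hy' := ht hy
  rw [Set.mem_iUnion₂] at hy'
  obtain ⟨z, hzt, hyz⟩ := hy'
  rw [Metric.mem_ball] at hyz
  intro a
  obtain ⟨n, hn, ha1, ha2⟩ := hMzsyn z a
  rw [Set.mem_setOf_eq] at hn
  refine ⟨n, ?_, ha1, ?_⟩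
  · rw [Set.mem_setOf_eq]
    have h1 : dist (omegaMap f n y) (omegaMap f n (z : X)) < ε/3 :=
      hδ1' y z (lt_of_lt_of_le hyz (min_le_left _ _)) n
    have h2 : dist y (z : X) < ε/3 := lt_of_lt_of_le hyz (min_le_right _ _)
    calc dist (omegaMap f n y) y
        ≤ dist (omegaMap f n y) (omegaMap f n (z : X))
          + dist (omegaMap f n (z : X)) (z : X) + dist (z : X) y :=
          dist_triangle4 _ _ _ _
      _ < ε/3 + ε/3 + ε/3 := by
          have := dist_comm y (z : X) ▸ h2
          linarith [dist_comm (z : X) y ▸ h2]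
      _ = ε := by ring
  · have hle : Mz z ≤ ((t.sup fun z => (Mz z).toNat : ℕ) : ℤ) ⊔ 1 := by
      refine le_trans ?_ le_sup_left
      refine le_trans (Int.self_le_toNat _) ?_
      exact Int.ofNat_le.mpr (Finset.le_sup (f := fun z => (Mz z).toNat) hzt)
    linarith [ha2, hle]
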